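/- Let k ≥ 4 be even and let H be a graph with ν(H) ≤ k−1, Δ(H) ≤ k−1, e(H) = f(k−1,k−1), and Gallai–Edmonds decomposition (D,A,C). Then C = ∅. -/

import Mathlib

/-!
If `v ∈ C`, a maximum matching pairs `v` with some `w`, and `w ∉ D` because `C` has no neighbours
in `D`. Replacing the edge `vw` by a path `v – x – w` through a new vertex `x` adds an edge and
keeps every degree at most `k - 1`. It does not raise the matching number: a matching through `x`,
say via `xv`, leaves a matching of `H` missing `v`, which is not maximum because `v ∉ D`. This
contradicts `e(H) = f(k - 1, k - 1)`.
-/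

open SimpleGraph

/-- Number of edges of a graph. -/
noncomputable def edgeCount {V : Type*} (G : SimpleGraph V) : ℕ := G.edgeSet.ncard

/-- Degree of a vertex. -/
noncomputable def deg {V : Type*} (G : SimpleGraph V) (v : V) : ℕ := (G.neighborSet v).ncard

/-- Maximum degree. -/
noncomputable def maxDeg {V : Type*} (G : SimpleGraph V) : ℕ := sSup (Set.range (deg G))

/-- Matching number: maximum size of a matching. -/
noncomputable def matchNum {V : Type*} (G : SimpleGraph V) : ℕ :=
  sSup {n | ∃ M : G.Subgraph, M.IsMatching ∧ M.edgeSet.ncard = n}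

/-- `G` contains a copy of `H` (a subgraph isomorphic to `H`). -/
def CopyIn {α β : Type*} (H : SimpleGraph α) (G : SimpleGraph β) : Prop :=
  ∃ f : H →g G, Function.Injective f

/-- The friendship graph `F_k`: `k` triangles sharing exactly one common vertex (vertex 0). -/
def friendship (k : ℕ) : SimpleGraph (Fin (2 * k + 1)) :=
  SimpleGraph.fromRel (fun a b => a.val = 0 ∨ b.val = 0 ∨ (a.val + 1) / 2 = (b.val + 1) / 2)

/-- The star `K_{1,m}` with center 0 and `m` leaves. -/
def starGraph (m : ℕ) : SimpleGraph (Fin (m + 1)) :=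
  SimpleGraph.fromRel (fun a b => a.val = 0 ∨ b.val = 0)

/-- The matching `mK_2` of `m` disjoint edges. -/
def matchGraph (m : ℕ) : SimpleGraph (Fin (2 * m)) :=
  SimpleGraph.fromRel (fun a b => a.val / 2 = b.val / 2)

/-- Turán number: max edges of an `n`-vertex graph with no copy of `H`. -/
noncomputable def exNum (n : ℕ) {α : Type*} (H : SimpleGraph α) : ℕ :=
  sSup {m | ∃ G : SimpleGraph (Fin n), ¬ CopyIn H G ∧ edgeCount G = m}

/-- `f(ν, Δ)`: max edges of a graph with matching number ≤ ν and max degree ≤ Δ. -/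
noncomputable def fMax (ν Δ : ℕ) : ℕ :=
  sSup {m | ∃ (n : ℕ) (G : SimpleGraph (Fin n)),
    matchNum G ≤ ν ∧ (∀ v, deg G v ≤ Δ) ∧ edgeCount G = m}

/-- A surjective edge-coloring of `K_n` using exactly `r` colors `0, …, r-1`. -/
def IsSurjColoring (n r : ℕ) (c : Sym2 (Fin n) → ℕ) : Prop :=
  (∀ e : Sym2 (Fin n), ¬ e.IsDiag → c e < r) ∧
  ∀ i < r, ∃ e : Sym2 (Fin n), ¬ e.IsDiag ∧ c e = i

/-- The colored `K_n` contains a rainbow copy of `H`. -/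
def RainbowCopy {α : Type*} {n : ℕ} (c : Sym2 (Fin n) → ℕ) (H : SimpleGraph α) : Prop :=
  ∃ f : H →g (⊤ : SimpleGraph (Fin n)), Function.Injective f ∧
    Set.InjOn (fun e => c (Sym2.map (⇑f) e)) H.edgeSet

/-- Anti-Ramsey number for the pair `{K_{1,k+1}, (k+1)K_2}`. -/
noncomputable def arPair (n k : ℕ) : ℕ :=
  sInf {r | ∀ c : Sym2 (Fin n) → ℕ, IsSurjColoring n r c →
    RainbowCopy c (_root_.starGraph (k + 1)) ∨ RainbowCopy c (matchGraph (k + 1))}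

/-- Anti-Ramsey number of the friendship graph `F_k`. -/
noncomputable def arFriend (n k : ℕ) : ℕ :=
  sInf {r | ∀ c : Sym2 (Fin n) → ℕ, IsSurjColoring n r c → RainbowCopy c (friendship k)}

/-- Anti-Ramsey number of a general graph `G`. -/
noncomputable def arGraph (n : ℕ) {α : Type*} (G : SimpleGraph α) : ℕ :=
  sInf {r | ∀ c : Sym2 (Fin n) → ℕ, IsSurjColoring n r c → RainbowCopy c G}

/-- Turán number of the family `{G − e : e ∈ E(G)}`. -/
noncomputable def exFamDel (n : ℕ) {α : Type*} (G : SimpleGraph α) : ℕ :=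
  sSup {m | ∃ H : SimpleGraph (Fin n),
    (∀ e ∈ G.edgeSet, ¬ CopyIn (G.deleteEdges {e}) H) ∧ edgeCount H = m}

namespace SimpleGraph

variable {V W : Type*} {G : SimpleGraph V} {G' : SimpleGraph W} {M : G.Subgraph}

namespace Subgraph

lemma IsMatching.ncard_verts [Finite V] (hM : M.IsMatching) :
    M.verts.ncard = 2 * M.edgeSet.ncard := by
  classical
  have := Fintype.ofFinite V
  have hedges : M.coe.edgeFinset.card = M.edgeSet.ncard := by
    rw [← image_coe_edgeSet_coe, Set.ncard_image_of_injective _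
      (Sym2.map.injective Subtype.val_injective), Set.ncard_eq_toFinset_card']
    rfl
  rw [← hedges, ← M.coe.sum_degrees_eq_twice_card_edges,
    Finset.sum_eq_card_nsmul (b := 1) fun v _ => ?_]
  · rw [smul_eq_mul, mul_one, Finset.card_univ, ← Nat.card_eq_fintype_card, Nat.card_coe_set_eq]
  · rw [coe_degree]
    convert (isMatching_iff_forall_degree.mp hM) v v.2

lemma IsMatching.deleteVerts_pair (hM : M.IsMatching) {u v : V} (huv : M.Adj u v) :
    (M.deleteVerts {u, v}).IsMatching := by
  rintro a ⟨ha, hauv⟩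
  obtain ⟨b, hab, hb⟩ := hM ha
  have hbuv : b ∉ ({u, v} : Set V) := by
    rintro (rfl | rfl)
    · exact hauv (.inr (hM.eq_of_adj_right hab huv.symm))
    · exact hauv (.inl (hM.eq_of_adj_right hab huv))
  exact ⟨b, deleteVerts_adj.mpr ⟨ha, hauv, M.edge_vert hab.symm, hbuv, hab⟩,
    fun c hc => hb c (deleteVerts_adj.mp hc).2.2.2.2⟩

lemma IsMatching.exists_isMatching_verts_eq_preimage {M : G'.Subgraph} (hM : M.IsMatching)
    {f : V → W} (hf : f.Injective) (hs : M.verts ⊆ Set.range f)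
    (hadj : ∀ a b, M.Adj (f a) (f b) → G.Adj a b) :
    ∃ N : G.Subgraph, N.IsMatching ∧ N.verts = f ⁻¹' M.verts := by
  refine ⟨{ verts := f ⁻¹' M.verts
            Adj := fun a b => M.Adj (f a) (f b)
            adj_sub := hadj _ _
            edge_vert := M.edge_vert
            symm := ⟨fun a b (h : M.Adj (f a) (f b)) => h.symm⟩ }, fun a ha => ?_, rfl⟩
  obtain ⟨y, hay, hy⟩ := hM ha
  obtain ⟨b, rfl⟩ := hs (M.edge_vert hay.symm)
  exact ⟨b, hay, fun c hc => hf (hy _ hc)⟩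

end Subgraph

section matchNum

variable [Finite V]

lemma bddAbove_ncard_edgeSet_isMatching :
    BddAbove {n | ∃ M : G.Subgraph, M.IsMatching ∧ M.edgeSet.ncard = n} :=
  ⟨edgeCount G, by rintro n ⟨M, -, rfl⟩; exact Set.ncard_le_ncard M.edgeSet_subset⟩

lemma exists_isMatching_ncard_edgeSet_eq_matchNum (G : SimpleGraph V) :
    ∃ M : G.Subgraph, M.IsMatching ∧ M.edgeSet.ncard = matchNum G :=
  Nat.sSup_mem (s := {n | ∃ M : G.Subgraph, M.IsMatching ∧ M.edgeSet.ncard = n})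
    ⟨0, ⊥, fun _ h => h.elim, by simp⟩ bddAbove_ncard_edgeSet_isMatching

lemma Subgraph.IsMatching.ncard_edgeSet_le_matchNum (hM : M.IsMatching) :
    M.edgeSet.ncard ≤ matchNum G :=
  le_csSup bddAbove_ncard_edgeSet_isMatching ⟨M, hM, rfl⟩

lemma Subgraph.IsMatching.ncard_verts_le_matchNum (hM : M.IsMatching) :
    M.verts.ncard ≤ 2 * matchNum G := by
  rw [hM.ncard_verts]
  exact Nat.mul_le_mul_left 2 hM.ncard_edgeSet_le_matchNum

lemma Subgraph.IsMatching.ncard_verts_lt_matchNum (hM : M.IsMatching) {u : V}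
    (hu : ∀ M' : G.Subgraph, M'.IsMatching → M'.edgeSet.ncard = matchNum G → u ∈ M'.verts)
    (huM : u ∉ M.verts) : M.verts.ncard < 2 * matchNum G := by
  rw [hM.ncard_verts]
  have := hM.ncard_edgeSet_le_matchNum
  have : M.edgeSet.ncard ≠ matchNum G := fun h => huM (hu M hM h)
  omega

lemma Subgraph.IsMatching.mem_verts_or_mem_verts_of_adj (hM : M.IsMatching)
    (hmax : M.edgeSet.ncard = matchNum G) {a b : V} (hab : G.Adj a b) :
    a ∈ M.verts ∨ b ∈ M.verts := by
  by_contra! h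
  have hdisj : Disjoint M.support (G.subgraphOfAdj hab).support := by
    rw [hM.support_eq_verts, support_subgraphOfAdj, Set.disjoint_right]
    rintro x (rfl | rfl) <;> tauto
  have hsup := hM.sup (.subgraphOfAdj hab) hdisj
  have hnew : s(a, b) ∉ M.edgeSet := fun hmem => h.1 (M.edge_vert hmem)
  have hcard : (M ⊔ G.subgraphOfAdj hab).edgeSet.ncard = M.edgeSet.ncard + 1 := by
    rw [Subgraph.edgeSet_sup, edgeSet_subgraphOfAdj, Set.union_singleton,
      Set.ncard_insert_of_notMem hnew]
  have := hsup.ncard_edgeSet_le_matchNum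
  omega

lemma edgeCount_le_two_mul_matchNum_mul {Δ : ℕ} (hΔ : ∀ v, deg G v ≤ Δ) :
    edgeCount G ≤ 2 * matchNum G * Δ := by
  classical
  have := Fintype.ofFinite V
  obtain ⟨M, hM, hmax⟩ := exists_isMatching_ncard_edgeSet_eq_matchNum G
  have hcover : G.edgeSet ⊆ ⋃ a ∈ M.verts.toFinset, G.incidenceSet a := by
    intro e he
    induction e using Sym2.ind with
    | _ a b =>
      simp only [Set.mem_toFinset, Set.mem_iUnion, exists_prop]
      rcases hM.mem_verts_or_mem_verts_of_adj hmax he with h | h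
      · exact ⟨a, h, he, Sym2.mem_mk_left a b⟩
      · exact ⟨b, h, he, Sym2.mem_mk_right a b⟩
  have hinc : ∀ a, (G.incidenceSet a).ncard ≤ Δ := fun a => by
    rw [← Nat.card_coe_set_eq, Nat.card_congr (G.incidenceSetEquivNeighborSet a),
      Nat.card_coe_set_eq]
    exact hΔ a
  calc edgeCount G ≤ ∑ a ∈ M.verts.toFinset, (G.incidenceSet a).ncard :=
        (Set.ncard_le_ncard hcover).trans (Finset.set_ncard_biUnion_le _ _)
    _ ≤ M.verts.toFinset.card * Δ := Finset.sum_le_card_nsmul _ _ _ fun a _ => hinc a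
    _ ≤ 2 * matchNum G * Δ := by
        rw [← Set.ncard_eq_toFinset_card']
        exact Nat.mul_le_mul_right Δ hM.ncard_verts_le_matchNum

end matchNum

lemma matchNum_le_of_injective [Finite W] (f : G →g G') (hf : Function.Injective f) :
    matchNum G ≤ matchNum G' := by
  have := Finite.of_injective f hf
  obtain ⟨M, hM, hmax⟩ := exists_isMatching_ncard_edgeSet_eq_matchNum G
  calc matchNum G = (M.map f).edgeSet.ncard := by
        rw [Subgraph.edgeSet_map, Set.ncard_image_of_injective _ (Sym2.map.injective hf), hmax]
    _ ≤ matchNum G' := (hM.map f hf).ncard_edgeSet_le_matchNum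

lemma Iso.edgeCount_eq (φ : G ≃g G') : edgeCount G = edgeCount G' := by
  rw [edgeCount, edgeCount, ← Nat.card_coe_set_eq, ← Nat.card_coe_set_eq]
  exact Nat.card_congr φ.mapEdgeSet

lemma Iso.deg_eq (φ : G ≃g G') (v : V) : deg G v = deg G' (φ v) := by
  rw [deg, deg, ← Nat.card_coe_set_eq, ← Nat.card_coe_set_eq]
  exact Nat.card_congr (φ.mapNeighborSet v)

end SimpleGraph

lemma bddAbove_fMax (ν Δ : ℕ) :
    BddAbove {m | ∃ (n : ℕ) (G : SimpleGraph (Fin n)),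
      matchNum G ≤ ν ∧ (∀ v, deg G v ≤ Δ) ∧ edgeCount G = m} := by
  refine ⟨2 * ν * Δ, ?_⟩
  rintro m ⟨n, G, hν, hΔ, rfl⟩
  exact (edgeCount_le_two_mul_matchNum_mul hΔ).trans (by gcongr)

lemma edgeCount_le_fMax {V : Type*} [Finite V] (G : SimpleGraph V) {ν Δ : ℕ}
    (hν : matchNum G ≤ ν) (hΔ : ∀ v, deg G v ≤ Δ) : edgeCount G ≤ fMax ν Δ := by
  have := Fintype.ofFinite V
  let φ := Iso.map (Fintype.equivFin V) G
  refine φ.edgeCount_eq ▸ le_csSup (bddAbove_fMax ν Δ) ⟨_, _, ?_, fun x => ?_, rfl⟩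
  · exact (matchNum_le_of_injective φ.symm.toHom φ.symm.injective).trans hν
  · exact φ.symm.deg_eq x ▸ hΔ _

namespace SimpleGraph

variable {V : Type*} (H : SimpleGraph V) (v w : V)

def subdivideEdge : SimpleGraph (Option V) where
  Adj
    | some a, some b => H.Adj a b ∧ s(a, b) ≠ s(v, w)
    | some a, none | none, some a => a = v ∨ a = w
    | none, none => False
  symm := ⟨by
    rintro (_ | a) (_ | b) h
    exacts [h, h, h, ⟨h.1.symm, Sym2.eq_swap (a := b) ▸ h.2⟩]⟩
  loopless := ⟨by rintro (_ | a) h; exacts [h, H.loopless.irrefl a h.1]⟩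

variable {H v w}

lemma deg_subdivideEdge_none_le : deg (H.subdivideEdge v w) none ≤ 2 := by
  have hsub : (H.subdivideEdge v w).neighborSet none ⊆ {some v, some w} := by
    rintro (_ | b) h
    · exact h.elim
    · rcases h with rfl | rfl <;> simp
  calc _ ≤ ({some v, some w} : Set (Option V)).ncard := Set.ncard_le_ncard hsub
    _ ≤ _ := (Set.ncard_insert_le _ _).trans (by simp)

lemma deg_subdivideEdge_some_le [Finite V] (hvw : H.Adj v w) (a : V) :
    deg (H.subdivideEdge v w) (some a) ≤ deg H a := by
  classical
  let g : V → Option V := fun b => if s(a, b) = s(v, w) then none else some b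
  have hsub : (H.subdivideEdge v w).neighborSet (some a) ⊆ g '' H.neighborSet a := by
    rintro (_ | b) h
    · rcases h with rfl | rfl
      · exact ⟨w, hvw, if_pos rfl⟩
      · exact ⟨v, hvw.symm, if_pos Sym2.eq_swap⟩
    · exact ⟨b, h.1, if_neg h.2⟩
  exact (Set.ncard_le_ncard hsub).trans (Set.ncard_image_le (Set.toFinite _))

lemma edgeCount_add_one_le_edgeCount_subdivideEdge [Finite V] (hvw : H.Adj v w) :
    edgeCount H + 1 ≤ edgeCount (H.subdivideEdge v w) := by
  let old := Sym2.map some '' (H.edgeSet \ {s(v, w)})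
  let new : Set (Sym2 (Option V)) := {s(some v, none), s(some w, none)}
  have hsub : old ∪ new ⊆ (H.subdivideEdge v w).edgeSet := by
    rintro _ (⟨e, he, rfl⟩ | he)
    · induction e using Sym2.ind with
      | _ a b => exact ⟨he.1, he.2⟩
    · rcases he with rfl | rfl
      exacts [Or.inl rfl, Or.inr rfl]
  have hdisj : Disjoint old new := by
    rw [Set.disjoint_right]
    rintro _ hnew ⟨e, -, he⟩
    have hnone : none ∈ Sym2.map some e := by rcases hnew with rfl | rfl <;> simp [he]
    simp at hnone
  have hold : old.ncard + 1 = edgeCount H := by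
    rw [Set.ncard_image_of_injective _ (Sym2.map.injective (Option.some_injective V))]
    exact Set.ncard_sdiff_singleton_add_one hvw
  have hnew : new.ncard = 2 := Set.ncard_pair (by simpa using hvw.ne)
  calc edgeCount H + 1 = (old ∪ new).ncard := by rw [Set.ncard_union_eq hdisj]; omega
    _ ≤ _ := Set.ncard_le_ncard hsub

lemma exists_isMatching_preimage_some {M : (H.subdivideEdge v w).Subgraph} (hM : M.IsMatching)
    (hnone : none ∉ M.verts) :
    ∃ N : H.Subgraph, N.IsMatching ∧ N.verts = some ⁻¹' M.verts ∧
      N.verts.ncard = M.verts.ncard := by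
  have hrange : M.verts ⊆ Set.range some :=
    (Set.isCompl_range_some_none V).le_left_iff.mpr (Set.disjoint_singleton_right.mpr hnone)
  obtain ⟨N, hN, hNverts⟩ := hM.exists_isMatching_verts_eq_preimage (Option.some_injective V)
    hrange fun a b h => (M.adj_sub h).1
  exact ⟨N, hN, hNverts,
    hNverts ▸ Set.ncard_preimage_of_injective_subset_range (Option.some_injective V) hrange⟩

lemma matchNum_subdivideEdge_le [Finite V]
    (hv : ∀ M : H.Subgraph, M.IsMatching → M.edgeSet.ncard = matchNum H → v ∈ M.verts)
    (hw : ∀ M : H.Subgraph, M.IsMatching → M.edgeSet.ncard = matchNum H → w ∈ M.verts) :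
    matchNum (H.subdivideEdge v w) ≤ matchNum H := by
  obtain ⟨M, hM, hmax⟩ := exists_isMatching_ncard_edgeSet_eq_matchNum (H.subdivideEdge v w)
  have hverts := hM.ncard_verts
  by_cases hnone : none ∈ M.verts
  · obtain ⟨_ | a, hna, -⟩ := hM hnone
    · exact (M.adj_sub hna).elim
    obtain ⟨N, hN, hNverts, hNcard⟩ := exists_isMatching_preimage_some (hM.deleteVerts_pair hna)
      fun h => h.2 (Set.mem_insert _ _)
    have hpair : {none, some a} ⊆ M.verts := Set.pair_subset hnone (M.edge_vert hna.symm)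
    have hcard := Set.ncard_sdiff_add_ncard_of_subset hpair
    rw [Set.ncard_pair (Option.some_ne_none a).symm, ← Subgraph.deleteVerts_verts, ← hNcard]
      at hcard
    have haN : a ∉ N.verts := by simp [hNverts]
    have := hN.ncard_verts_lt_matchNum ((M.adj_sub hna).elim (· ▸ hv) (· ▸ hw)) haN
    omega
  · obtain ⟨N, hN, -, hNcard⟩ := exists_isMatching_preimage_some hM hnone
    have := hN.ncard_verts_le_matchNum
    omega

end SimpleGraph

theorem stmt19_general {V : Type*} [Fintype V] (k : ℕ) (hk : 4 ≤ k)
    (H : SimpleGraph V)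
    (hm : matchNum H ≤ k - 1) (hd : ∀ v, deg H v ≤ k - 1)
    (he : edgeCount H = fMax (k - 1) (k - 1)) :
    let D : Set V := {v | ∃ M : H.Subgraph, M.IsMatching ∧
      M.edgeSet.ncard = matchNum H ∧ v ∉ M.verts}
    let A : Set V := {v | v ∉ D ∧ ∃ u ∈ D, H.Adj v u}
    let C : Set V := (Set.univ \ D) \ A
    C = (∅ : Set V) := by
  intro D A C
  refine Set.eq_empty_iff_forall_notMem.mpr fun v ⟨⟨_, hvD⟩, hvA⟩ => ?_
  have hcovered : ∀ u ∉ D, ∀ M : H.Subgraph, M.IsMatching → M.edgeSet.ncard = matchNum H →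
      u ∈ M.verts := fun u hu M hM hmax => by_contra fun h => hu ⟨M, hM, hmax, h⟩
  obtain ⟨M, hM, hmax⟩ := exists_isMatching_ncard_edgeSet_eq_matchNum H
  obtain ⟨w, hvw, -⟩ := hM (hcovered v hvD M hM hmax)
  have hwD : w ∉ D := fun hwD => hvA ⟨hvD, w, hwD, M.adj_sub hvw⟩
  have hmatch := (matchNum_subdivideEdge_le (hcovered v hvD) (hcovered w hwD)).trans hm
  have hdeg : ∀ x, deg (H.subdivideEdge v w) x ≤ k - 1 := by
    rintro (_ | a)
    · exact deg_subdivideEdge_none_le.trans (by omega)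
    · exact (deg_subdivideEdge_some_le (M.adj_sub hvw) a).trans (hd a)
  have := edgeCount_le_fMax _ hmatch hdeg
  have := edgeCount_add_one_le_edgeCount_subdivideEdge (M.adj_sub hvw)
  omega

/-- Claim 4: in an extremal graph for `f(k-1, k-1)` (`k ≥ 4` even), the Gallai–Edmonds
set `C` is empty. -/
theorem stmt19 {V : Type*} [Fintype V] (k : ℕ) (hk : 4 ≤ k) (hkeven : Even k)
    (H : SimpleGraph V)
    (hm : matchNum H ≤ k - 1) (hd : ∀ v, deg H v ≤ k - 1)
    (he : edgeCount H = fMax (k - 1) (k - 1)) :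
    let D : Set V := {v | ∃ M : H.Subgraph, M.IsMatching ∧
      M.edgeSet.ncard = matchNum H ∧ v ∉ M.verts}
    let A : Set V := {v | v ∉ D ∧ ∃ u ∈ D, H.Adj v u}
    let C : Set V := (Set.univ \ D) \ A
    C = (∅ : Set V) :=
  stmt19_general k hk H hm hd he
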